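/- In a unital associative algebra over ℂ containing elements a and a* satisfying the one-variable q-commutation relation a* a = q a a* + 1 (for a fixed scalar q), for all k, l ≥ 0 one has a*^k a^l = ∑_{m=0}^{min(k,l)} q^{(k-m)(l-m)} binom(k,k-m)_q binom(l,m)_q [m]_q! · a^{l-m} a*^{k-m}, where [m]_q! is the q-factorial and binom(·,·)_q the Gaussian binomial. -/
import Mathlib


/-- The `q`-integer `[m]_q = 1 + q + ⋯ + q^{m-1}` (over `ℂ`). -/
noncomputable def qint (q : ℂ) (m : ℕ) : ℂ := ∑ i ∈ Finset.range m, q ^ i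

/-- The `q`-factorial `[m]_q! = ∏_{i=1}^m [i]_q` (over `ℂ`). -/
noncomputable def qfact (q : ℂ) (m : ℕ) : ℂ := ∏ i ∈ Finset.range m, qint q (i + 1)

/-- The Gaussian binomial coefficient `binom(n,k)_q = [n]_q!/([k]_q![n-k]_q!)`,
defined as a polynomial expression in `q` via the `q`-Pascal recursion. -/
noncomputable def qbinom (q : ℂ) : ℕ → ℕ → ℂ
  | _, 0 => 1
  | 0, _ + 1 => 0
  | n + 1, k + 1 => qbinom q n k + q ^ (k + 1) * qbinom q n (k + 1)

lemma qint_zero (q : ℂ) : qint q 0 = 0 := by simp [qint]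
lemma qint_one (q : ℂ) : qint q 1 = 1 := by simp [qint]

lemma qint_add (q : ℂ) (a b : ℕ) : qint q (a + b) = qint q a + q ^ a * qint q b := by
  simp only [qint, Finset.sum_range_add, pow_add, Finset.mul_sum]

lemma qbinom_zero_right (q : ℂ) (n : ℕ) : qbinom q n 0 = 1 := by cases n <;> rfl

lemma qbinom_succ (q : ℂ) (n k : ℕ) :
    qbinom q (n+1) (k+1) = qbinom q n k + q ^ (k + 1) * qbinom q n (k + 1) := rfl

lemma qbinom_eq_zero (q : ℂ) : ∀ n k : ℕ, n < k → qbinom q n k = 0 := by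
  intro n
  induction n with
  | zero =>
    intro k hk
    cases k with
    | zero => omega
    | succ j => rfl
  | succ n ih =>
    intro k hk
    cases k with
    | zero => omega
    | succ j => rw [qbinom_succ, ih j (by omega), ih (j+1) (by omega)]; ring

lemma qbinom_self (q : ℂ) (n : ℕ) : qbinom q n n = 1 := by
  induction n with
  | zero => rfl
  | succ n ih => rw [qbinom_succ, ih, qbinom_eq_zero q n (n+1) (by omega)]; ring

lemma qbinom_one (q : ℂ) (n : ℕ) : qbinom q n 1 = qint q n := by
  induction n with
  | zero => rw [qbinom_eq_zero q 0 1 (by omega), qint_zero]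
  | succ n ih =>
    rw [qbinom_succ, qbinom_zero_right, ih,
      show n + 1 = 1 + n from by omega, qint_add, qint_one, pow_one]

lemma qfact_succ (q : ℂ) (m : ℕ) : qfact q (m + 1) = qfact q m * qint q (m + 1) :=
  Finset.prod_range_succ _ _

lemma qfact_zero (q : ℂ) : qfact q 0 = 1 := rfl

/-- The `q`-absorption identity `[k+1]_q binom(l,k+1)_q = [l-k]_q binom(l,k)_q`. -/
lemma qabsorb (q : ℂ) : ∀ l k : ℕ,
    qint q (k + 1) * qbinom q l (k + 1) = qint q (l - k) * qbinom q l k := by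
  intro l
  induction l with
  | zero =>
    intro k
    rw [qbinom_eq_zero q 0 (k+1) (by omega)]
    cases k with
    | zero => simp [qint_zero]
    | succ j => rw [qbinom_eq_zero q 0 (j+1) (by omega)]; ring
  | succ l ih =>
    intro k
    by_cases hk : k ≤ l
    · cases k with
      | zero =>
        rw [qbinom_one, qbinom_zero_right, qint_one, Nat.sub_zero]; ring
      | succ j =>
        rw [show l + 1 - (j+1) = l - j from by omega, qbinom_succ, qbinom_succ]
        have hC := ih (j+1)
        have hD := ih j
        have hG := qint_add q (j+1+1) (l-(j+1))
        rw [show j+1+1+(l-(j+1)) = l+1 from by omega] at hG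
        have hH := qint_add q (j+1) (l-j)
        rw [show (j+1)+(l-j) = l+1 from by omega] at hH
        linear_combination q^(j+1+1)*hC + hD + qbinom q l (j+1) * hH - qbinom q l (j+1) * hG
    · rw [qbinom_eq_zero q (l+1) (k+1) (by omega),
        show l + 1 - k = 0 from by omega, qint_zero]
      ring

/-- The coefficient appearing in the reordering formula. -/
noncomputable def qcoef (q : ℂ) (k l m : ℕ) : ℂ :=
  q ^ ((k - m) * (l - m)) * qbinom q k (k - m) * qbinom q l m * qfact q m

lemma qcoef_zero (q : ℂ) (k l : ℕ) : q ^ l * qcoef q k l 0 = qcoef q (k+1) l 0 := by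
  simp only [qcoef, Nat.sub_zero, qbinom_self, qbinom_zero_right, qfact_zero]
  rw [mul_one, mul_one, mul_one, mul_one, mul_one, ← pow_add,
    show l + k * l = (k+1) * l from by ring, mul_one]

lemma qcoef_top (q : ℂ) (k l : ℕ) :
    qint q (l - k) * qcoef q k l k = qcoef q (k+1) l (k+1) := by
  simp only [qcoef, Nat.sub_self, Nat.zero_mul, pow_zero, qbinom_zero_right, qfact_succ]
  linear_combination (-(qfact q k)) * (qabsorb q l k)

lemma qcoef_rec (q : ℂ) (k l m : ℕ) (hm : m + 1 ≤ k) :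
    q ^ (l - (m+1)) * qcoef q k l (m+1) + qint q (l - m) * qcoef q k l m
      = qcoef q (k+1) l (m+1) := by
  by_cases hl : l ≤ m
  · simp only [qcoef, qbinom_eq_zero q l (m+1) (by omega),
      show l - m = 0 from by omega, qint_zero]
    ring
  · obtain ⟨p, hp⟩ : ∃ p, k = m + 1 + p := ⟨k - (m+1), by omega⟩
    obtain ⟨r, hr⟩ : ∃ r, l = m + 1 + r := ⟨l - (m+1), by omega⟩
    simp only [qcoef, show k - (m+1) = p from by omega, show l - (m+1) = r from by omega,
      show k - m = p + 1 from by omega, show l - m = r + 1 from by omega,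
      show k + 1 - (m+1) = p + 1 from by omega]
    have hP := qbinom_succ q k p
    have hAb := qabsorb q l m
    rw [show l - m = r + 1 from by omega] at hAb
    have hF := qfact_succ q m
    linear_combination (-(q^((p+1)*r) * qbinom q l (m+1) * qfact q (m+1))) * hP
      - (q^((p+1)*(r+1)) * qbinom q k (p+1) * qfact q m) * hAb
      - (q^((p+1)*(r+1)) * qbinom q k (p+1) * qbinom q l (m+1)) * hF

lemma astar_mul_pow {A : Type*} [Ring A] [Algebra ℂ A] (q : ℂ) (a astar : A)
    (hrel : astar * a = q • (a * astar) + 1) :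
    ∀ j : ℕ, astar * a ^ j = q ^ j • (a ^ j * astar) + qint q j • a ^ (j - 1) := by
  have key : ∀ j : ℕ, astar * a ^ (j + 1)
      = q ^ (j + 1) • (a ^ (j + 1) * astar) + qint q (j + 1) • a ^ j := by
    intro j
    induction j with
    | zero => simpa [qint_one] using hrel
    | succ j ih =>
      rw [pow_succ a (j+1), ← mul_assoc, ih, add_mul, smul_mul_assoc, smul_mul_assoc,
        mul_assoc, hrel, ← pow_succ a (j+1)]
      rw [mul_add, mul_one, mul_smul_comm, ← mul_assoc, ← pow_succ a (j+1), smul_add,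
        smul_smul, ← pow_succ q (j+1), ← pow_succ a j]
      rw [show qint q (j + 1 + 1) = qint q (j+1) + q ^ (j+1) * qint q 1 from
        qint_add q (j+1) 1, qint_one, mul_one, add_smul]
      abel
  intro j
  cases j with
  | zero => simp [qint_zero]
  | succ j => simpa using key j

lemma qcomm_aux {A : Type*} [Ring A] [Algebra ℂ A]
    (q : ℂ) (a astar : A) (hrel : astar * a = q • (a * astar) + 1) (l : ℕ) :
    ∀ k : ℕ, astar ^ k * a ^ l =
      ∑ m ∈ Finset.range (k + 1), qcoef q k l m • (a ^ (l - m) * astar ^ (k - m)) := by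
  intro k
  induction k with
  | zero =>
    simp [qcoef, qbinom_zero_right, qbinom_self, qfact_zero]
  | succ k ih =>
    have hterm : ∀ m ∈ Finset.range (k + 1),
        astar * (qcoef q k l m • (a ^ (l - m) * astar ^ (k - m)))
          = (q ^ (l - m) * qcoef q k l m) • (a ^ (l - m) * astar ^ (k + 1 - m))
            + (qint q (l - m) * qcoef q k l m) •
              (a ^ (l - (m + 1)) * astar ^ (k + 1 - (m + 1))) := by
      intro m hm
      have hmk : m ≤ k := by
        have := Finset.mem_range.mp hm; omega
      have h1 : k - m + 1 = k + 1 - m := by omega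
      have h2 : l - m - 1 = l - (m + 1) := by omega
      have h3 : k - m = k + 1 - (m + 1) := by omega
      calc astar * (qcoef q k l m • (a ^ (l - m) * astar ^ (k - m)))
          = qcoef q k l m • ((astar * a ^ (l - m)) * astar ^ (k - m)) := by
            rw [mul_smul_comm, mul_assoc]
        _ = qcoef q k l m • ((q ^ (l - m) • (a ^ (l - m) * astar)
              + qint q (l - m) • a ^ (l - m - 1)) * astar ^ (k - m)) := by
            rw [astar_mul_pow q a astar hrel]
        _ = _ := by
            rw [add_mul, smul_mul_assoc, smul_mul_assoc, mul_assoc,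
              ← pow_succ' astar (k - m), h1, h2, h3, smul_add, smul_smul, smul_smul,
              mul_comm (qcoef q k l m) (q ^ (l - m)),
              mul_comm (qcoef q k l m) (qint q (l - m))]
    rw [pow_succ' astar k, mul_assoc, ih, Finset.mul_sum,
      Finset.sum_congr rfl hterm, Finset.sum_add_distrib]
    rw [Finset.sum_range_succ'
      (fun m => qcoef q (k+1) l m • (a ^ (l - m) * astar ^ (k + 1 - m))) (k+1)]
    rw [Finset.sum_range_succ
      (fun m => qcoef q (k+1) l (m+1) • (a ^ (l - (m+1)) * astar ^ (k + 1 - (m+1)))) k]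
    rw [Finset.sum_range_succ'
      (fun m => (q ^ (l - m) * qcoef q k l m) • (a ^ (l - m) * astar ^ (k + 1 - m))) k]
    rw [Finset.sum_range_succ
      (fun m => (qint q (l - m) * qcoef q k l m) •
        (a ^ (l - (m + 1)) * astar ^ (k + 1 - (m + 1)))) k]
    have e1 : (∑ m ∈ Finset.range k,
          (q ^ (l - (m+1)) * qcoef q k l (m+1)) • (a ^ (l - (m+1)) * astar ^ (k + 1 - (m+1))))
        + ∑ m ∈ Finset.range k,
          (qint q (l - m) * qcoef q k l m) • (a ^ (l - (m+1)) * astar ^ (k + 1 - (m+1)))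
        = ∑ m ∈ Finset.range k,
          qcoef q (k+1) l (m+1) • (a ^ (l - (m+1)) * astar ^ (k + 1 - (m+1))) := by
      rw [← Finset.sum_add_distrib]
      refine Finset.sum_congr rfl fun m hm => ?_
      have hmk : m + 1 ≤ k := by
        have := Finset.mem_range.mp hm; omega
      rw [← add_smul, qcoef_rec q k l m hmk]
    have e2 : (q ^ (l - 0) * qcoef q k l 0) • (a ^ (l - 0) * astar ^ (k + 1 - 0))
        = qcoef q (k+1) l 0 • (a ^ (l - 0) * astar ^ (k + 1 - 0)) := by
      rw [Nat.sub_zero l, qcoef_zero]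
    have e3 : (qint q (l - k) * qcoef q k l k) • (a ^ (l - (k+1)) * astar ^ (k + 1 - (k+1)))
        = qcoef q (k+1) l (k+1) • (a ^ (l - (k+1)) * astar ^ (k + 1 - (k+1))) := by
      rw [qcoef_top]
    rw [e2, e3, ← e1]
    abel

/-- in a unital associative `ℂ`-algebra with elements `a`, `a*`
satisfying `a* a = q a a* + 1`, one has, for all `k, l ≥ 0`,
`a*^k a^l = ∑_{m=0}^{min(k,l)} q^{(k-m)(l-m)} binom(k,k-m)_q binom(l,m)_q [m]_q!
· a^{l-m} a*^{k-m}`. -/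
theorem qcommutation_reordering {A : Type*} [Ring A] [Algebra ℂ A]
    (q : ℂ) (a astar : A) (hrel : astar * a = q • (a * astar) + 1) (k l : ℕ) :
    astar ^ k * a ^ l =
      ∑ m ∈ Finset.range (min k l + 1),
        (q ^ ((k - m) * (l - m)) * qbinom q k (k - m) * qbinom q l m * qfact q m) •
          (a ^ (l - m) * astar ^ (k - m)) := by
  rw [qcomm_aux q a astar hrel l k]
  have hsub : Finset.range (min k l + 1) ⊆ Finset.range (k + 1) :=
    Finset.range_subset_range.mpr (by omega)
  have hz : ∀ x ∈ Finset.range (k + 1), x ∉ Finset.range (min k l + 1) →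
      qcoef q k l x • (a ^ (l - x) * astar ^ (k - x)) = 0 := by
    intro x hx hnx
    have hx' := Finset.mem_range.mp hx
    have hnx' : ¬ x < min k l + 1 := fun h => hnx (Finset.mem_range.mpr h)
    have hlx : l < x := by omega
    rw [qcoef, qbinom_eq_zero q l x hlx]
    simp
  rw [← Finset.sum_subset hsub hz]
  exact Finset.sum_congr rfl fun m _ => by rw [qcoef]
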